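/- arXiv:1209.5767 — 4 statements merged into one kernel-verified Lean document; each statement's English description precedes it below -/
import Mathlib

section
/- For every u in C_c^1(ℝ²) (continuously differentiable with compact support) one has the Ladyzhenskaya-type interpolation inequality ‖u‖_{L³(ℝ²)} ≤ 2^{1/3} · ‖∇u‖_{L²(ℝ²)}^{1/3} · ‖u‖_{L²(ℝ²)}^{2/3}. -/
/-!
Along every horizontal or vertical line, the fundamental theorem of calculus bounds a compactly
supported `C¹` function `v` by the `L¹` norm of the corresponding partial derivative on that line.
Multiplying the two bounds and integrating with Fubini gives `∫ v² ≤ ‖∂₁v‖₁ ‖∂₂v‖₁`. For `v = u²`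
we have `∂ᵢv = 2u ∂ᵢu`, so Cauchy–Schwarz and `2ab ≤ a² + b²` give Ladyzhenskaya's inequality
`∫ u⁴ ≤ 2 ‖∇u‖₂² ‖u‖₂²`, and one more Cauchy–Schwarz, `∫ |u|³ ≤ ‖u‖₂ ‖u²‖₂`, gives the `L³` bound.
-/

open MeasureTheory Topology Set

lemma isClosedEmbedding_prodMkLeft {X Y : Type*} [TopologicalSpace X] [TopologicalSpace Y]
    [T1Space Y] (y : Y) : IsClosedEmbedding fun x : X ↦ (x, y) :=
  ⟨isEmbedding_prodMkLeft y, by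
    rw [show range (fun x : X ↦ (x, y)) = univ ×ˢ {y} by ext ⟨a, b⟩; simp [eq_comm]]
    exact isClosed_univ.prod isClosed_singleton⟩

lemma isClosedEmbedding_prodMkRight {X Y : Type*} [TopologicalSpace X] [TopologicalSpace Y]
    [T1Space X] (x : X) : IsClosedEmbedding (Prod.mk x : Y → X × Y) :=
  ⟨isEmbedding_prodMkRight x, by
    rw [show range (Prod.mk x : Y → X × Y) = {x} ×ˢ univ by ext ⟨a, b⟩; simp [eq_comm]]
    exact isClosed_singleton.prod isClosed_univ⟩

section

variable {E : Type*} [NormedAddCommGroup E] [NormedSpace ℝ E] [CompleteSpace E]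

lemma HasCompactSupport.norm_le_integral_norm_deriv {f : ℝ → E} (hf : ContDiff ℝ 1 f)
    (h2f : HasCompactSupport f) (x : ℝ) : ‖f x‖ ≤ ∫ t, ‖deriv f t‖ := by
  rw [← h2f.integral_Iic_deriv_eq hf x]
  calc ‖∫ t in Iic x, deriv f t‖ ≤ ∫ t in Iic x, ‖deriv f t‖ := norm_integral_le_integral_norm _
    _ ≤ ∫ t, ‖deriv f t‖ :=
      setIntegral_le_integral
        ((hf.continuous_deriv le_rfl).norm.integrable_of_hasCompactSupport h2f.deriv.norm)
        (.of_forall fun _ ↦ norm_nonneg _)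

variable {v : ℝ × ℝ → E}

lemma norm_le_integral_norm_fderiv_apply_fst (hv : ContDiff ℝ 1 v) (h2v : HasCompactSupport v)
    (x y : ℝ) : ‖v (x, y)‖ ≤ ∫ t, ‖fderiv ℝ v (t, y) (1, 0)‖ := by
  have hderiv (t : ℝ) : deriv (fun s ↦ v (s, y)) t = fderiv ℝ v (t, y) (1, 0) :=
    ((hv.differentiable one_ne_zero _).hasFDerivAt.comp_hasDerivAt t
      ((hasDerivAt_id t).prodMk (hasDerivAt_const t y))).deriv
  have hslice : ContDiff ℝ 1 fun s ↦ v (s, y) := hv.comp (contDiff_id.prodMk contDiff_const)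
  have h2slice : HasCompactSupport fun s ↦ v (s, y) :=
    h2v.comp_isClosedEmbedding (isClosedEmbedding_prodMkLeft y)
  simpa only [hderiv] using h2slice.norm_le_integral_norm_deriv hslice x

lemma norm_le_integral_norm_fderiv_apply_snd (hv : ContDiff ℝ 1 v) (h2v : HasCompactSupport v)
    (x y : ℝ) : ‖v (x, y)‖ ≤ ∫ t, ‖fderiv ℝ v (x, t) (0, 1)‖ := by
  have hderiv (t : ℝ) : deriv (fun s ↦ v (x, s)) t = fderiv ℝ v (x, t) (0, 1) :=
    ((hv.differentiable one_ne_zero _).hasFDerivAt.comp_hasDerivAt t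
      ((hasDerivAt_const t x).prodMk (hasDerivAt_id t))).deriv
  have hslice : ContDiff ℝ 1 fun s ↦ v (x, s) := hv.comp (contDiff_const.prodMk contDiff_id)
  have h2slice : HasCompactSupport fun s ↦ v (x, s) :=
    h2v.comp_isClosedEmbedding (isClosedEmbedding_prodMkRight x)
  simpa only [hderiv] using h2slice.norm_le_integral_norm_deriv hslice y

theorem integral_norm_sq_le_integral_norm_fderiv_fst_mul_snd (hv : ContDiff ℝ 1 v)
    (h2v : HasCompactSupport v) :
    ∫ p, ‖v p‖ ^ 2 ≤ (∫ p, ‖fderiv ℝ v p (1, 0)‖) * ∫ p, ‖fderiv ℝ v p (0, 1)‖ := by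
  have hint (w : ℝ × ℝ) : Integrable fun p ↦ ‖fderiv ℝ v p w‖ :=
    ((hv.continuous_fderiv one_ne_zero).clm_apply continuous_const).norm
      |>.integrable_of_hasCompactSupport (h2v.fderiv_apply (𝕜 := ℝ) w).norm
  let F := fun y : ℝ ↦ ∫ t, ‖fderiv ℝ v (t, y) (1, 0)‖
  let G := fun x : ℝ ↦ ∫ t, ‖fderiv ℝ v (x, t) (0, 1)‖
  have hpointwise (p : ℝ × ℝ) : ‖v p‖ ^ 2 ≤ G p.1 * F p.2 := by
    rw [sq]
    exact mul_le_mul (norm_le_integral_norm_fderiv_apply_snd hv h2v p.1 p.2)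
      (norm_le_integral_norm_fderiv_apply_fst hv h2v p.1 p.2) (norm_nonneg _)
      (integral_nonneg fun _ ↦ norm_nonneg _)
  have hvsq : Integrable fun p ↦ ‖v p‖ ^ 2 := by
    have h1 : Continuous fun p ↦ ‖v p‖ ^ 2 := hv.continuous.norm.pow 2
    have h2 : HasCompactSupport fun p ↦ ‖v p‖ ^ 2 := h2v.comp_left (g := fun x ↦ ‖x‖ ^ 2) (by simp)
    exact h1.integrable_of_hasCompactSupport h2
  have hGF : Integrable fun p : ℝ × ℝ ↦ G p.1 * F p.2 :=
    (hint (0, 1)).integral_prod_left.mul_prod (hint (1, 0)).integral_prod_right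
  calc ∫ p, ‖v p‖ ^ 2 ≤ ∫ p : ℝ × ℝ, G p.1 * F p.2 := integral_mono hvsq hGF hpointwise
    _ = (∫ x, G x) * ∫ y, F y := integral_prod_mul G F
    _ = _ := by
      rw [mul_comm, ← integral_prod_symm _ (hint (1, 0)), ← integral_prod _ (hint (0, 1))]
      rfl

end

lemma integral_abs_mul_abs_le_sqrt_mul_sqrt {α : Type*} [MeasurableSpace α] {μ : Measure α}
    {f g : α → ℝ} (hf : MemLp f 2 μ) (hg : MemLp g 2 μ) :
    ∫ a, |f a| * |g a| ∂μ ≤ √(∫ a, f a ^ 2 ∂μ) * √(∫ a, g a ^ 2 ∂μ) := by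
  have := integral_mul_norm_le_Lp_mul_Lq (μ := μ) .two_two (by simpa using hf) (by simpa using hg)
  simpa [Real.sqrt_eq_rpow, Real.norm_eq_abs, sq_abs] using this

section

variable {u : ℝ × ℝ → ℝ}

lemma fderiv_sq_apply (hu : Differentiable ℝ u) (p w : ℝ × ℝ) :
    fderiv ℝ (fun q ↦ u q ^ 2) p w = 2 * u p * fderiv ℝ u p w := by
  rw [fderiv_fun_pow 2 (hu p)]
  simp only [smul_apply, smul_eq_mul, nsmul_eq_mul]
  ring

theorem ladyzhenskaya_L4 (hu : ContDiff ℝ 1 u) (hsupp : HasCompactSupport u) :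
    ∫ p, u p ^ 4 ≤
      2 * (∫ p, fderiv ℝ u p (1, 0) ^ 2 + fderiv ℝ u p (0, 1) ^ 2) * ∫ p, u p ^ 2 := by
  have hmemLp (w : ℝ × ℝ) : MemLp (fun p ↦ fderiv ℝ u p w) 2 :=
    ((hu.continuous_fderiv one_ne_zero).clm_apply continuous_const).memLp_of_hasCompactSupport
      (hsupp.fderiv_apply (𝕜 := ℝ) w)
  set B := ∫ p, u p ^ 2
  set X := ∫ p, fderiv ℝ u p (1, 0) ^ 2
  set Y := ∫ p, fderiv ℝ u p (0, 1) ^ 2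
  have hpartial (w : ℝ × ℝ) :
      ∫ p, ‖fderiv ℝ (fun q ↦ u q ^ 2) p w‖ ≤ 2 * (√B * √(∫ p, fderiv ℝ u p w ^ 2)) := by
    simp only [fderiv_sq_apply (hu.differentiable one_ne_zero), Real.norm_eq_abs, abs_mul,
      abs_two, mul_assoc, integral_const_mul]
    gcongr
    exact integral_abs_mul_abs_le_sqrt_mul_sqrt
      (hu.continuous.memLp_of_hasCompactSupport hsupp) (hmemLp w)
  have hgagliardo := integral_norm_sq_le_integral_norm_fderiv_fst_mul_snd (hu.pow 2)
    (hsupp.comp_left (g := fun x ↦ x ^ 2) (by simp))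
  have hX : 0 ≤ X := integral_nonneg fun _ ↦ sq_nonneg _
  have hY : 0 ≤ Y := integral_nonneg fun _ ↦ sq_nonneg _
  have hB : 0 ≤ B := integral_nonneg fun _ ↦ sq_nonneg _
  calc ∫ p, u p ^ 4 = ∫ p, ‖u p ^ 2‖ ^ 2 := by
        simp only [norm_pow, Real.norm_eq_abs, sq_abs]
        ring_nf
    _ ≤ (2 * (√B * √X)) * (2 * (√B * √Y)) :=
      hgagliardo.trans <| mul_le_mul (hpartial _) (hpartial _)
        (integral_nonneg fun _ ↦ norm_nonneg _) (by positivity)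
    _ = 2 * B * (2 * √X * √Y) := by
      linear_combination 4 * √X * √Y * Real.mul_self_sqrt hB
    _ ≤ 2 * B * (X + Y) := by
      gcongr
      nlinarith [sq_nonneg (√X - √Y), Real.sq_sqrt hX, Real.sq_sqrt hY]
    _ = _ := by
      rw [integral_add ((hmemLp _).integrable_sq) ((hmemLp _).integrable_sq)]
      ring

theorem integral_abs_pow_three_le (hu : ContDiff ℝ 1 u) (hsupp : HasCompactSupport u) :
    ∫ p, |u p| ^ 3 ≤
      2 * √(∫ p, fderiv ℝ u p (1, 0) ^ 2 + fderiv ℝ u p (0, 1) ^ 2) * ∫ p, u p ^ 2 := by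
  set A := ∫ p, fderiv ℝ u p (1, 0) ^ 2 + fderiv ℝ u p (0, 1) ^ 2
  set B := ∫ p, u p ^ 2
  have hB : 0 ≤ B := integral_nonneg fun _ ↦ sq_nonneg _
  have hsq : MemLp (fun p ↦ u p ^ 2) 2 := by
    have h2sq : HasCompactSupport fun p ↦ u p ^ 2 := hsupp.comp_left (g := fun x ↦ x ^ 2) (by simp)
    exact (hu.continuous.pow 2).memLp_of_hasCompactSupport h2sq
  calc ∫ p, |u p| ^ 3 = ∫ p, |u p| * |u p ^ 2| := by
        simp only [abs_pow]
        ring_nf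
    _ ≤ √B * √(∫ p, (u p ^ 2) ^ 2) :=
      integral_abs_mul_abs_le_sqrt_mul_sqrt (hu.continuous.memLp_of_hasCompactSupport hsupp) hsq
    _ ≤ √B * √(2 * A * B) := by
      gcongr
      simpa only [← pow_mul] using ladyzhenskaya_L4 hu hsupp
    _ = √2 * √A * B := by
      rw [Real.sqrt_mul (by positivity), Real.sqrt_mul (by positivity)]
      linear_combination √2 * √A * Real.mul_self_sqrt hB
    _ ≤ 2 * √A * B := by
      gcongr
      exact Real.sqrt_le_iff.mpr (by norm_num)

end

/-- Ladyzhenskaya-type interpolation inequality (2.5) with `q = 3`: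
for `u ∈ C_c^1(ℝ²)`, `‖u‖_{L³} ≤ 2^{1/3} ‖∇u‖_{L²}^{1/3} ‖u‖_{L²}^{2/3}`. -/
theorem ladyzhenskaya_L3 (u : ℝ × ℝ → ℝ) (hu : ContDiff ℝ 1 u)
    (hsupp : HasCompactSupport u) :
    (∫ p : ℝ × ℝ, |u p| ^ 3) ^ ((1 : ℝ) / 3) ≤
      (2 : ℝ) ^ ((1 : ℝ) / 3) *
        ((∫ p : ℝ × ℝ, ((fderiv ℝ u p) (1, 0)) ^ 2 + ((fderiv ℝ u p) (0, 1)) ^ 2) ^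
            ((1 : ℝ) / 2)) ^ ((1 : ℝ) / 3) *
        ((∫ p : ℝ × ℝ, (u p) ^ 2) ^ ((1 : ℝ) / 2)) ^ ((2 : ℝ) / 3) := by
  have hA : 0 ≤ ∫ p : ℝ × ℝ, fderiv ℝ u p (1, 0) ^ 2 + fderiv ℝ u p (0, 1) ^ 2 :=
    integral_nonneg fun _ ↦ by positivity
  have hB : 0 ≤ ∫ p : ℝ × ℝ, u p ^ 2 := integral_nonneg fun _ ↦ sq_nonneg _
  calc _ ≤ (2 * √(∫ p, fderiv ℝ u p (1, 0) ^ 2 + fderiv ℝ u p (0, 1) ^ 2) * ∫ p, u p ^ 2) ^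
          ((1 : ℝ) / 3) :=
        Real.rpow_le_rpow (integral_nonneg fun _ ↦ by positivity)
          (integral_abs_pow_three_le hu hsupp) (by norm_num)
    _ = _ := by
      rw [Real.mul_rpow (by positivity) hB, Real.mul_rpow (by norm_num) (by positivity),
        Real.sqrt_eq_rpow, ← Real.rpow_mul hB]
      norm_num
end

section
/- The function u(x,y) = cos(y/2)·(1 − cos(√3·x/2)) satisfies u_x + u_{xxx} + u_{xyy} = 0 at every (x,y) ∈ ℝ², and satisfies the boundary conditions u(x, −π) = u(x, π) = 0 for all x, and u(0,y) = u(4π/√3, y) = u_x(4π/√3, y) = 0 for all y. Consequently it is a stationary (non-decaying) solution of the linearized Zakharov–Kuznetsov equation u_t + u_x + u_{xxx} + u_{xyy} = 0 on the rectangle (0, 4π/√3) × (−π, π). -/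
/-!
Separation of variables: for `u = Y(y) X(x)` with `Y = cos (l y)` we have `Y'' = -l² Y`, so
`u_x + u_xxx + u_xyy = Y (X' + X''' - l² X')`. For `X = 1 - cos (k x)` this equals
`Y · k sin (k x) · (1 - k² - l²)`, which vanishes when `k² + l² = 1`. The choice `k = √3/2`,
`l = 1/2` puts the zeros of `Y` at `y = ±π` and makes `4π/√3 = 2π/k` a period of `X`, where `X`
and `X'` vanish as they do at `x = 0`.
-/

open Real

theorem iterate_deriv_const_mul {𝕜 : Type*} [NontriviallyNormedField 𝕜] (c : 𝕜) (f : 𝕜 → 𝕜)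
    (n : ℕ) :
    deriv^[n] (fun x => c * f x) = fun x => c * deriv^[n] f x := by
  induction n with
  | zero => rfl
  | succ n ih => simp only [Function.iterate_succ_apply', ih, deriv_const_mul_field']

theorem iterate_deriv_mul_const {𝕜 : Type*} [NontriviallyNormedField 𝕜] (c : 𝕜) (f : 𝕜 → 𝕜)
    (n : ℕ) :
    deriv^[n] (fun x => f x * c) = fun x => deriv^[n] f x * c := by
  induction n with
  | zero => rfl
  | succ n ih => simp only [Function.iterate_succ_apply', ih, deriv_mul_const_field']

theorem deriv_cos_mul (k : ℝ) : deriv (fun t => cos (k * t)) = fun t => -k * sin (k * t) := by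
  funext t
  simpa [mul_comm] using ((hasDerivAt_id t).const_mul k).cos.deriv

theorem deriv_sin_mul (k : ℝ) : deriv (fun t => sin (k * t)) = fun t => k * cos (k * t) := by
  funext t
  simpa [mul_comm] using ((hasDerivAt_id t).const_mul k).sin.deriv

theorem deriv_one_sub_cos_mul (k : ℝ) :
    deriv (fun t => 1 - cos (k * t)) = fun t => k * sin (k * t) := by
  simp only [deriv_const_sub', deriv_cos_mul, neg_mul, neg_neg]

theorem iterate_deriv_three_one_sub_cos_mul (k : ℝ) :
    deriv^[3] (fun t => 1 - cos (k * t)) = fun t => -(k ^ 3 * sin (k * t)) := by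
  simp only [Function.iterate_succ_apply, Function.iterate_zero_apply, deriv_one_sub_cos_mul,
    deriv_const_mul_field', deriv_sin_mul, deriv_cos_mul]
  funext t; ring

theorem iterate_deriv_two_cos_mul (l : ℝ) :
    deriv^[2] (fun t => cos (l * t)) = fun t => -(l ^ 2 * cos (l * t)) := by
  simp only [Function.iterate_succ_apply, Function.iterate_zero_apply, deriv_cos_mul,
    deriv_const_mul_field', deriv_sin_mul]
  funext t; ring

noncomputable def linearZKOperator (u : ℝ → ℝ → ℝ) (x y : ℝ) : ℝ :=
  deriv (fun x' => u x' y) x + deriv^[3] (fun x' => u x' y) x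
    + deriv (fun x' => deriv^[2] (fun y' => u x' y') y) x

noncomputable def separatedZKSolution (k l x y : ℝ) : ℝ := cos (l * y) * (1 - cos (k * x))

theorem linearZKOperator_separatedZKSolution {k l : ℝ} (h : k ^ 2 + l ^ 2 = 1) (x y : ℝ) :
    linearZKOperator (separatedZKSolution k l) x y = 0 := by
  simp only [linearZKOperator, separatedZKSolution, iterate_deriv_const_mul,
    iterate_deriv_mul_const, iterate_deriv_two_cos_mul, deriv_const_mul_field',
    iterate_deriv_three_one_sub_cos_mul, deriv_one_sub_cos_mul]
  linear_combination (-(cos (l * y) * k * sin (k * x))) * h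

theorem separatedZKSolution_zero_left (k l y : ℝ) : separatedZKSolution k l 0 y = 0 := by
  simp [separatedZKSolution]

theorem separatedZKSolution_two_pi_div {k : ℝ} (hk : k ≠ 0) (l y : ℝ) :
    separatedZKSolution k l (2 * π / k) y = 0 := by
  simp [separatedZKSolution, mul_div_cancel₀ _ hk]

theorem deriv_separatedZKSolution_two_pi_div {k : ℝ} (hk : k ≠ 0) (l y : ℝ) :
    deriv (fun x => separatedZKSolution k l x y) (2 * π / k) = 0 := by
  simp only [separatedZKSolution, deriv_const_mul_field', deriv_one_sub_cos_mul,
    mul_div_cancel₀ _ hk, sin_two_pi, mul_zero]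

theorem separatedZKSolution_inv_two_neg_pi_and_pi (k x : ℝ) :
    separatedZKSolution k 2⁻¹ x (-π) = 0 ∧ separatedZKSolution k 2⁻¹ x π = 0 := by
  simp [separatedZKSolution, inv_mul_eq_div]

/-- The function `u(x,y) = cos(y/2)(1 - cos(√3 x/2))` satisfies
`u_x + u_{xxx} + u_{xyy} = 0` on `ℝ²` together with the boundary conditions
`u(x,±π) = 0`, `u(0,y) = u(4π/√3,y) = u_x(4π/√3,y) = 0`; hence it is a stationary
(non-decaying) solution of the linearized Zakharov–Kuznetsov equation
`u_t + u_x + u_{xxx} + u_{xyy} = 0` on the rectangle `(0, 4π/√3) × (-π, π)`. -/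
theorem stationary_solution_linearized_ZK :
    let u : ℝ → ℝ → ℝ := fun x y =>
      Real.cos (y / 2) * (1 - Real.cos (Real.sqrt 3 * x / 2))
    (∀ x y : ℝ,
      deriv (fun x' => u x' y) x + deriv^[3] (fun x' => u x' y) x
        + deriv (fun x' => deriv^[2] (fun y' => u x' y') y) x = 0) ∧
    (∀ x : ℝ, u x (-Real.pi) = 0 ∧ u x Real.pi = 0) ∧
    (∀ y : ℝ, u 0 y = 0 ∧ u (4 * Real.pi / Real.sqrt 3) y = 0 ∧
      deriv (fun x' => u x' y) (4 * Real.pi / Real.sqrt 3) = 0) ∧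
    (∀ x y t : ℝ,
      deriv (fun _ : ℝ => u x y) t + deriv (fun x' => u x' y) x
        + deriv^[3] (fun x' => u x' y) x
        + deriv (fun x' => deriv^[2] (fun y' => u x' y') y) x = 0) := by
  intro u
  have hu : u = separatedZKSolution (√3 / 2) 2⁻¹ := by
    funext x y
    simp only [u, separatedZKSolution, div_eq_inv_mul, mul_comm, mul_left_comm]
  have hkl : (√3 / 2) ^ 2 + (2⁻¹ : ℝ) ^ 2 = 1 := by
    rw [div_pow, sq_sqrt zero_le_three]; norm_num
  have hL : 4 * π / √3 = 2 * π / (√3 / 2) := by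
    field_simp; ring
  have pde := linearZKOperator_separatedZKSolution hkl
  rw [hu, hL]
  have hk0 : √3 / 2 ≠ 0 := by positivity
  refine ⟨pde, separatedZKSolution_inv_two_neg_pi_and_pi _,
    fun y => ⟨separatedZKSolution_zero_left _ _ y, separatedZKSolution_two_pi_div hk0 _ y,
      deriv_separatedZKSolution_two_pi_div hk0 _ y⟩,
    fun x y t => ?_⟩
  rw [deriv_const, zero_add]
  exact pde x y
end

section
/- Let μ₁, μ₂, μ₃ be pairwise distinct complex numbers and L > 0 a real number. There exist complex numbers C₁, C₂, C₃, not all zero, satisfying the four equations C₁+C₂+C₃ = 0, μ₁C₁+μ₂C₂+μ₃C₃ = 0, C₁e^{μ₁L}+C₂e^{μ₂L}+C₃e^{μ₃L} = 0, and μ₁C₁e^{μ₁L}+μ₂C₂e^{μ₂L}+μ₃C₃e^{μ₃L} = 0, if and only if e^{μ₁L} = e^{μ₂L} = e^{μ₃L}. -/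
/-- Condition (6.100): for pairwise distinct `μ₁, μ₂, μ₃ ∈ ℂ` and `L > 0`,
the boundary system coming from `p(0) = p(L) = p'(0) = p'(L) = 0` for
`p(x) = C₁e^{μ₁x} + C₂e^{μ₂x} + C₃e^{μ₃x}` has a nontrivial solution
`(C₁, C₂, C₃)` if and only if `e^{μ₁L} = e^{μ₂L} = e^{μ₃L}`. -/
theorem nontrivial_coefficients_iff_equal_exponentials
    (μ₁ μ₂ μ₃ : ℂ) (L : ℝ) (hL : 0 < L)
    (h12 : μ₁ ≠ μ₂) (h13 : μ₁ ≠ μ₃) (h23 : μ₂ ≠ μ₃) :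
    (∃ C₁ C₂ C₃ : ℂ, ¬(C₁ = 0 ∧ C₂ = 0 ∧ C₃ = 0) ∧
      C₁ + C₂ + C₃ = 0 ∧
      μ₁ * C₁ + μ₂ * C₂ + μ₃ * C₃ = 0 ∧
      C₁ * Complex.exp (μ₁ * L) + C₂ * Complex.exp (μ₂ * L)
        + C₃ * Complex.exp (μ₃ * L) = 0 ∧
      μ₁ * C₁ * Complex.exp (μ₁ * L) + μ₂ * C₂ * Complex.exp (μ₂ * L)
        + μ₃ * C₃ * Complex.exp (μ₃ * L) = 0) ↔
    (Complex.exp (μ₁ * L) = Complex.exp (μ₂ * L) ∧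
      Complex.exp (μ₂ * L) = Complex.exp (μ₃ * L)) := by
  set e₁ := Complex.exp (μ₁ * L) with he1
  set e₂ := Complex.exp (μ₂ * L) with he2
  set e₃ := Complex.exp (μ₃ * L) with he3
  constructor
  · rintro ⟨C₁, C₂, C₃, hnt, h1, h2, h3, h4⟩
    have A1 : (μ₁ - μ₃) * C₁ + (μ₂ - μ₃) * C₂ = 0 := by linear_combination h2 - μ₃ * h1
    have A2 : (μ₁ - μ₃) * C₁ * e₁ + (μ₂ - μ₃) * C₂ * e₂ = 0 := by
      linear_combination h4 - μ₃ * h3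
    have B1 : (μ₁ - μ₂) * C₁ + (μ₃ - μ₂) * C₃ = 0 := by linear_combination h2 - μ₂ * h1
    have B2 : (μ₁ - μ₂) * C₁ * e₁ + (μ₃ - μ₂) * C₃ * e₃ = 0 := by
      linear_combination h4 - μ₂ * h3
    have hC₁ : C₁ ≠ 0 := by
      intro hC
      apply hnt
      have hC₂ : C₂ = 0 := by
        have := A1
        rw [hC, mul_zero, zero_add] at this
        exact (mul_eq_zero.1 this).resolve_left (sub_ne_zero.2 h23)
      refine ⟨hC, hC₂, ?_⟩
      simpa [hC, hC₂] using h1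
    have key12 : (μ₁ - μ₃) * C₁ * (e₁ - e₂) = 0 := by linear_combination A2 - e₂ * A1
    have key13 : (μ₁ - μ₂) * C₁ * (e₁ - e₃) = 0 := by linear_combination B2 - e₃ * B1
    have h12' : e₁ = e₂ := by
      rcases mul_eq_zero.1 key12 with h | h
      · rcases mul_eq_zero.1 h with h | h
        · exact absurd (sub_eq_zero.1 h) h13
        · exact absurd h hC₁
      · exact sub_eq_zero.1 h
    have h13' : e₁ = e₃ := by
      rcases mul_eq_zero.1 key13 with h | h
      · rcases mul_eq_zero.1 h with h | h
        · exact absurd (sub_eq_zero.1 h) h12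
        · exact absurd h hC₁
      · exact sub_eq_zero.1 h
    exact ⟨h12', h12' ▸ h13'⟩
  · rintro ⟨hA, hB⟩
    refine ⟨μ₂ - μ₃, μ₃ - μ₁, μ₁ - μ₂, ?_, by ring, by ring, ?_, ?_⟩
    · rintro ⟨h, -, -⟩
      exact h23 (sub_eq_zero.1 h)
    · rw [hA, ← hB]; ring
    · rw [hA, ← hB]; ring
end

section
/- Let L, B, T > 0, let D = (0,L)×(−B,B), and let u be smooth on [0,L]×[−B,B]×[0,T], satisfy u_t + (1+u)u_x + u_{xxx} + u_{xyy} = 0 on D×(0,T), and satisfy the boundary conditions u(x,±B,t) = 0 and u(0,y,t) = u(L,y,t) = u_x(L,y,t) = 0. Then for every t ∈ [0,T]: ∫_D u²(x,y,t) dx dy + ∫_0^t ∫_{−B}^{B} u_x(0,y,τ)² dy dτ = ∫_D u(x,y,0)² dx dy. -/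
open MeasureTheory Set

noncomputable def pd (v : ℝ × ℝ × ℝ) (f : ℝ × ℝ × ℝ → ℝ) : ℝ × ℝ × ℝ → ℝ :=
  fun p => fderiv ℝ f p v

lemma ContDiff.pd_smooth {f : ℝ × ℝ × ℝ → ℝ} (hf : ContDiff ℝ (⊤ : ℕ∞) f) (v : ℝ × ℝ × ℝ) :
    ContDiff ℝ (⊤ : ℕ∞) (pd v f) :=
  (hf.fderiv_right (by simp)).clm_apply contDiff_const

lemma pd_pd {f : ℝ × ℝ × ℝ → ℝ} (hf : ContDiff ℝ (⊤ : ℕ∞) f) (v w : ℝ × ℝ × ℝ) (p : ℝ × ℝ × ℝ) :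
    pd v (pd w f) p = fderiv ℝ (fderiv ℝ f) p v w := by
  have hd2 : DifferentiableAt ℝ (fderiv ℝ f) p :=
    ((hf.fderiv_right (m := (⊤ : ℕ∞)) (by simp)).differentiable (by simp)) p
  rw [show pd v (pd w f) p = fderiv ℝ (fun q => (fderiv ℝ f q) w) p v from rfl]
  rw [fderiv_clm_apply hd2 (differentiableAt_const w)]
  simp

lemma pd_comm {f : ℝ × ℝ × ℝ → ℝ} (hf : ContDiff ℝ (⊤ : ℕ∞) f) (v w : ℝ × ℝ × ℝ) :
    pd v (pd w f) = pd w (pd v f) := by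
  funext p
  have hd : Differentiable ℝ f := hf.differentiable (by simp)
  have hd2 : DifferentiableAt ℝ (fderiv ℝ f) p :=
    ((hf.fderiv_right (m := (⊤ : ℕ∞)) (by simp)).differentiable (by simp)) p
  rw [pd_pd hf, pd_pd hf,
    second_derivative_symmetric (fun y => (hd y).hasFDerivAt) hd2.hasFDerivAt v w]

lemma pd_mul {f g : ℝ × ℝ × ℝ → ℝ} {p : ℝ × ℝ × ℝ} (hf : DifferentiableAt ℝ f p)
    (hg : DifferentiableAt ℝ g p) (v : ℝ × ℝ × ℝ) :
    pd v (fun q => f q * g q) p = pd v f p * g p + f p * pd v g p := by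
  have := fderiv_fun_mul hf hg
  simp only [pd, this, ContinuousLinearMap.add_apply, ContinuousLinearMap.smul_apply,
    smul_eq_mul]
  ring

lemma pd_add {f g : ℝ × ℝ × ℝ → ℝ} {p : ℝ × ℝ × ℝ} (hf : DifferentiableAt ℝ f p)
    (hg : DifferentiableAt ℝ g p) (v : ℝ × ℝ × ℝ) :
    pd v (fun q => f q + g q) p = pd v f p + pd v g p := by
  simp only [pd, fderiv_fun_add hf hg]; simp

lemma pd_sub {f g : ℝ × ℝ × ℝ → ℝ} {p : ℝ × ℝ × ℝ} (hf : DifferentiableAt ℝ f p)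
    (hg : DifferentiableAt ℝ g p) (v : ℝ × ℝ × ℝ) :
    pd v (fun q => f q - g q) p = pd v f p - pd v g p := by
  simp only [pd, fderiv_fun_sub hf hg]; simp

lemma pd_const_mul {f : ℝ × ℝ × ℝ → ℝ} {p : ℝ × ℝ × ℝ} (hf : DifferentiableAt ℝ f p)
    (c : ℝ) (v : ℝ × ℝ × ℝ) :
    pd v (fun q => c * f q) p = c * pd v f p := by
  simp only [pd, fderiv_const_mul hf c]; simp

section slices
variable {f : ℝ × ℝ × ℝ → ℝ}

lemma hasDerivAt_slice_x (hf : Differentiable ℝ f) (x y t : ℝ) :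
    HasDerivAt (fun x' => f (x', y, t)) (pd (1, 0, 0) f (x, y, t)) x := by
  have h1 : HasDerivAt (fun x' : ℝ => (x', y, t)) ((1 : ℝ), (0 : ℝ), (0 : ℝ)) x :=
    HasDerivAt.prodMk (hasDerivAt_id x) (hasDerivAt_const x (y, t))
  exact (hf (x, y, t)).hasFDerivAt.comp_hasDerivAt x h1

lemma hasDerivAt_slice_y (hf : Differentiable ℝ f) (x y t : ℝ) :
    HasDerivAt (fun y' => f (x, y', t)) (pd (0, 1, 0) f (x, y, t)) y := by
  have h1 : HasDerivAt (fun y' : ℝ => (x, y', t)) ((0 : ℝ), (1 : ℝ), (0 : ℝ)) y :=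
    HasDerivAt.prodMk (hasDerivAt_const y x) (HasDerivAt.prodMk (hasDerivAt_id y) (hasDerivAt_const y t))
  exact (hf (x, y, t)).hasFDerivAt.comp_hasDerivAt y h1

lemma hasDerivAt_slice_t (hf : Differentiable ℝ f) (x y t : ℝ) :
    HasDerivAt (fun t' => f (x, y, t')) (pd (0, 0, 1) f (x, y, t)) t := by
  have h1 : HasDerivAt (fun t' : ℝ => (x, y, t')) ((0 : ℝ), (0 : ℝ), (1 : ℝ)) t :=
    HasDerivAt.prodMk (hasDerivAt_const t x) (HasDerivAt.prodMk (hasDerivAt_const t y) (hasDerivAt_id t))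
  exact (hf (x, y, t)).hasFDerivAt.comp_hasDerivAt t h1

lemma deriv_slice_x (hf : Differentiable ℝ f) (x y t : ℝ) :
    deriv (fun x' => f (x', y, t)) x = pd (1, 0, 0) f (x, y, t) :=
  (hasDerivAt_slice_x hf x y t).deriv

lemma deriv_slice_y (hf : Differentiable ℝ f) (x y t : ℝ) :
    deriv (fun y' => f (x, y', t)) y = pd (0, 1, 0) f (x, y, t) :=
  (hasDerivAt_slice_y hf x y t).deriv

lemma deriv_slice_t (hf : Differentiable ℝ f) (x y t : ℝ) :
    deriv (fun t' => f (x, y, t')) t = pd (0, 0, 1) f (x, y, t) :=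
  (hasDerivAt_slice_t hf x y t).deriv

end slices

lemma integral_Ioo_deriv {g g' : ℝ → ℝ} {a b : ℝ} (hab : a ≤ b)
    (hg : ∀ x, HasDerivAt g (g' x) x) (hc : Continuous g') :
    ∫ x in Ioo a b, g' x = g b - g a := by
  rw [← integral_Ioc_eq_integral_Ioo, ← intervalIntegral.integral_of_le hab]
  exact intervalIntegral.integral_eq_sub_of_hasDerivAt (fun x _ => hg x)
    (hc.intervalIntegrable a b)

lemma int_box2 {f : ℝ × ℝ → ℝ} (hf : Continuous f) (a b c d : ℝ) :
    Integrable f ((volume.restrict (Ioo a b)).prod (volume.restrict (Ioo c d))) := by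
  rw [Measure.prod_restrict, ← Measure.volume_eq_prod]
  exact (hf.continuousOn.integrableOn_compact (isCompact_Icc.prod isCompact_Icc)).mono_set
    (prod_mono Ioo_subset_Icc_self Ioo_subset_Icc_self)

lemma int_box3 {f : ℝ × ℝ × ℝ → ℝ} (hf : Continuous f) (a b c d e g : ℝ) :
    Integrable f ((volume.restrict (Ioo a b)).prod
      ((volume.restrict (Ioo c d)).prod (volume.restrict (Ioo e g)))) := by
  rw [Measure.prod_restrict, Measure.prod_restrict, ← Measure.volume_eq_prod, ← Measure.volume_eq_prod]
  exact (hf.continuousOn.integrableOn_compact (isCompact_Icc.prod (isCompact_Icc.prod isCompact_Icc))).mono_set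
    (prod_mono Ioo_subset_Icc_self (prod_mono Ioo_subset_Icc_self Ioo_subset_Icc_self))

namespace ZK

noncomputable section
variable (U : ℝ × ℝ × ℝ → ℝ)

def ex : ℝ × ℝ × ℝ := (1, 0, 0)
def ey : ℝ × ℝ × ℝ := (0, 1, 0)
def et : ℝ × ℝ × ℝ := (0, 0, 1)

/-- u_x -/ def A := pd ex U
/-- u_y -/ def Bd := pd ey U
/-- u_t -/ def C := pd et U
/-- u_xx -/ def Axx := pd ex (A U)
/-- u_xxx -/ def Axxx := pd ex (Axx U)
/-- u_xy -/ def Aye := pd ey (A U)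
/-- flux in x -/
def P : ℝ × ℝ × ℝ → ℝ := fun p =>
  U p ^ 2 + (2 / 3) * U p ^ 3 + 2 * U p * Axx U p - A U p ^ 2 - Bd U p ^ 2
/-- flux in y -/
def Q : ℝ × ℝ × ℝ → ℝ := fun p => 2 * U p * Aye U p
/-- d/dt of u² -/
def St : ℝ × ℝ × ℝ → ℝ := fun p => 2 * U p * C U p
/-- d/dx of P -/
def Px : ℝ × ℝ × ℝ → ℝ := fun p =>
  2 * U p * A U p + 2 * U p ^ 2 * A U p + 2 * U p * Axxx U p - 2 * Bd U p * pd ex (Bd U) p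
/-- d/dy of Q -/
def Qy : ℝ × ℝ × ℝ → ℝ := fun p =>
  2 * Bd U p * Aye U p + 2 * U p * pd ey (Aye U) p

variable {U} (hU : ContDiff ℝ (⊤ : ℕ∞) U)
include hU

lemma smA : ContDiff ℝ (⊤ : ℕ∞) (A U) := hU.pd_smooth _
lemma smB : ContDiff ℝ (⊤ : ℕ∞) (Bd U) := hU.pd_smooth _
lemma smC : ContDiff ℝ (⊤ : ℕ∞) (C U) := hU.pd_smooth _
lemma smAxx : ContDiff ℝ (⊤ : ℕ∞) (Axx U) := (smA hU).pd_smooth _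
lemma smAxxx : ContDiff ℝ (⊤ : ℕ∞) (Axxx U) := (smAxx hU).pd_smooth _
lemma smAye : ContDiff ℝ (⊤ : ℕ∞) (Aye U) := (smA hU).pd_smooth _

lemma hasDerivAt_St (x y t : ℝ) :
    HasDerivAt (fun t' => U (x, y, t') ^ 2) (St U (x, y, t)) t := by
  have h := (hasDerivAt_slice_t (hU.differentiable (by simp)) x y t).pow 2
  refine h.congr_deriv ?_
  simp only [St, C, et]
  push_cast; ring

lemma hasDerivAt_Px (x y t : ℝ) :
    HasDerivAt (fun x' => P U (x', y, t)) (Px U (x, y, t)) x := by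
  have hdU := hU.differentiable (by simp)
  have h1 := hasDerivAt_slice_x hdU x y t
  have h2 := hasDerivAt_slice_x ((smA hU).differentiable (by simp)) x y t
  have h3 := hasDerivAt_slice_x ((smAxx hU).differentiable (by simp)) x y t
  have h4 := hasDerivAt_slice_x ((smB hU).differentiable (by simp)) x y t
  have h := ((((h1.pow 2).add ((h1.pow 3).const_mul (2/3 : ℝ))).add
      (((h1.const_mul 2).mul h3))).sub (h2.pow 2)).sub (h4.pow 2)
  refine h.congr_deriv ?_
  simp only [Px, A, Bd, Axx, Axxx, ex]
  push_cast; ring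

lemma hasDerivAt_Qy (x y t : ℝ) :
    HasDerivAt (fun y' => Q U (x, y', t)) (Qy U (x, y, t)) y := by
  have h1 := hasDerivAt_slice_y (hU.differentiable (by simp)) x y t
  have h2 := hasDerivAt_slice_y ((smAye hU).differentiable (by simp)) x y t
  have h := (h1.const_mul 2).mul h2
  exact h

/-- the key pointwise divergence identity, given the PDE at an interior point -/
lemma key_identity {x y t : ℝ}
    (hp : pd et U (x, y, t) + (1 + U (x, y, t)) * pd ex U (x, y, t)
      + pd ex (pd ex (pd ex U)) (x, y, t) + pd ex (pd ey (pd ey U)) (x, y, t) = 0) :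
    St U (x, y, t) = -Px U (x, y, t) - Qy U (x, y, t) := by
  have s1 : pd ey (pd ex U) = pd ex (pd ey U) := pd_comm hU _ _
  have s3 : pd ey (pd ex (pd ey U)) = pd ex (pd ey (pd ey U)) := pd_comm (hU.pd_smooth _) _ _
  have c3 : Axxx U = pd ex (pd ex (pd ex U)) := rfl
  simp only [St, Px, Qy, C, A, Bd, Aye, c3, s1, s3]
  linear_combination (2 * U (x, y, t)) * hp

lemma deriv3_slice (x y t : ℝ) :
    deriv^[3] (fun x' => U (x', y, t)) x = pd ex (pd ex (pd ex U)) (x, y, t) := by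
  have hdU := hU.differentiable (by simp)
  have e1 : deriv (fun x' => U (x', y, t)) = fun x' => pd ex U (x', y, t) :=
    funext fun x' => deriv_slice_x hdU x' y t
  have e2 : deriv (fun x' => pd ex U (x', y, t)) = fun x' => pd ex (pd ex U) (x', y, t) :=
    funext fun x' => deriv_slice_x ((hU.pd_smooth _).differentiable (by simp)) x' y t
  show deriv (deriv (deriv (fun x' => U (x', y, t)))) x = _
  rw [e1, e2]
  exact deriv_slice_x (((hU.pd_smooth _).pd_smooth _).differentiable (by simp)) x y t

lemma deriv2y_slice (x y t : ℝ) :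
    deriv^[2] (fun y' => U (x, y', t)) y = pd ey (pd ey U) (x, y, t) := by
  have e1 : deriv (fun y' => U (x, y', t)) = fun y' => pd ey U (x, y', t) :=
    funext fun y' => deriv_slice_y (hU.differentiable (by simp)) x y' t
  show deriv (deriv (fun y' => U (x, y', t))) y = _
  rw [e1]
  exact deriv_slice_y ((hU.pd_smooth _).differentiable (by simp)) x y t

lemma mixed_slice (x y t : ℝ) :
    deriv (fun x' => deriv^[2] (fun y' => U (x', y', t)) y) x
      = pd ex (pd ey (pd ey U)) (x, y, t) := by
  have e1 : (fun x' => deriv^[2] (fun y' => U (x', y', t)) y)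
      = fun x' => pd ey (pd ey U) (x', y, t) :=
    funext fun x' => deriv2y_slice hU x' y t
  rw [e1]
  exact deriv_slice_x (((hU.pd_smooth _).pd_smooth _).differentiable (by simp)) x y t

end
end ZK

lemma deriv_zero_of_eventually {g : ℝ → ℝ} {y : ℝ} {s : Set ℝ}
    (hs : s ∈ nhds y) (h : ∀ z ∈ s, g z = 0) : deriv g y = 0 := by
  have : g =ᶠ[nhds y] (fun _ => (0 : ℝ)) := Filter.eventuallyEq_of_mem hs h
  rw [this.deriv_eq, deriv_const]

lemma int_Ioo {g : ℝ → ℝ} (hg : Continuous g) (a b : ℝ) :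
    Integrable g (volume.restrict (Ioo a b)) :=
  (hg.continuousOn.integrableOn_compact isCompact_Icc).mono_set Ioo_subset_Icc_self

lemma int_box3' {f : (ℝ × ℝ) × ℝ → ℝ} (hf : Continuous f) (a b c d e g : ℝ) :
    Integrable f (((volume.restrict (Ioo a b)).prod (volume.restrict (Ioo c d))).prod
      (volume.restrict (Ioo e g))) := by
  rw [Measure.prod_restrict, Measure.prod_restrict, ← Measure.volume_eq_prod,
    ← Measure.volume_eq_prod]
  exact (hf.continuousOn.integrableOn_compact
      ((isCompact_Icc.prod isCompact_Icc).prod isCompact_Icc)).mono_set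
    (prod_mono (prod_mono Ioo_subset_Icc_self Ioo_subset_Icc_self) Ioo_subset_Icc_self)

lemma cont_slice_x {f : ℝ × ℝ × ℝ → ℝ} (hf : Continuous f) (y t : ℝ) :
    Continuous fun x => f (x, y, t) :=
  hf.comp (continuous_id.prodMk continuous_const)

lemma cont_slice_y {f : ℝ × ℝ × ℝ → ℝ} (hf : Continuous f) (x t : ℝ) :
    Continuous fun y => f (x, y, t) :=
  hf.comp (continuous_const.prodMk (continuous_id.prodMk continuous_const))

lemma cont_slice_t {f : ℝ × ℝ × ℝ → ℝ} (hf : Continuous f) (x y : ℝ) :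
    Continuous fun t => f (x, y, t) :=
  hf.comp (continuous_const.prodMk (continuous_const.prodMk continuous_id))

lemma cont_slice_yt {f : ℝ × ℝ × ℝ → ℝ} (hf : Continuous f) (x : ℝ) :
    Continuous fun q : ℝ × ℝ => f (x, q.1, q.2) :=
  hf.comp (continuous_const.prodMk continuous_id)

lemma cont_slice_xt {f : ℝ × ℝ × ℝ → ℝ} (hf : Continuous f) (y : ℝ) :
    Continuous fun q : ℝ × ℝ => f (q.1, y, q.2) :=
  hf.comp (continuous_fst.prodMk (continuous_const.prodMk continuous_snd))

lemma cont_slice_xy {f : ℝ × ℝ × ℝ → ℝ} (hf : Continuous f) (t : ℝ) :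
    Continuous fun q : ℝ × ℝ => f (q.1, q.2, t) :=
  hf.comp (continuous_fst.prodMk (continuous_snd.prodMk continuous_const))

/-- Estimate I (identity (3.5) with `ε = 0`): the basic `L²` energy identity for the
Zakharov–Kuznetsov equation `u_t + (1+u)u_x + u_{xxx} + u_{xyy} = 0` on the rectangle
`D = (0,L) × (-B,B)` with the boundary conditions (2.2)-(2.3). -/
theorem ZK_energy_identity (L B T : ℝ) (hL : 0 < L) (hB : 0 < B) (hT : 0 < T)
    (u : ℝ → ℝ → ℝ → ℝ)
    (hu : ContDiff ℝ (⊤ : ℕ∞) (fun p : ℝ × ℝ × ℝ => u p.1 p.2.1 p.2.2))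
    (hpde : ∀ x ∈ Ioo 0 L, ∀ y ∈ Ioo (-B) B, ∀ t ∈ Ioo 0 T,
      deriv (fun t' => u x y t') t
        + (1 + u x y t) * deriv (fun x' => u x' y t) x
        + deriv^[3] (fun x' => u x' y t) x
        + deriv (fun x' => deriv^[2] (fun y' => u x' y' t) y) x = 0)
    (hby : ∀ x ∈ Icc 0 L, ∀ t ∈ Icc 0 T, u x (-B) t = 0 ∧ u x B t = 0)
    (hbx : ∀ y ∈ Icc (-B) B, ∀ t ∈ Icc 0 T,
      u 0 y t = 0 ∧ u L y t = 0 ∧ deriv (fun x' => u x' y t) L = 0) :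
    ∀ t ∈ Icc 0 T,
      (∫ x in Ioo 0 L, ∫ y in Ioo (-B) B, (u x y t) ^ 2)
        + (∫ τ in Ioo 0 t, ∫ y in Ioo (-B) B, (deriv (fun x' => u x' y τ) 0) ^ 2)
      = ∫ x in Ioo 0 L, ∫ y in Ioo (-B) B, (u x y 0) ^ 2 := by
  intro t ht
  set U : ℝ × ℝ × ℝ → ℝ := fun p => u p.1 p.2.1 p.2.2 with hUdef
  have hdU : Differentiable ℝ U := hu.differentiable (by simp)
  have h0t : (0 : ℝ) ≤ t := ht.1
  have htT : t ≤ T := ht.2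
  have hBB : -B ≤ B := by linarith
  have h0L : (0 : ℝ) ≤ L := hL.le
  -- continuity facts
  have cU : Continuous U := hu.continuous
  have cA : Continuous (ZK.A U) := (ZK.smA hu).continuous
  have cB : Continuous (ZK.Bd U) := (ZK.smB hu).continuous
  have cC : Continuous (ZK.C U) := (ZK.smC hu).continuous
  have cAxxx : Continuous (ZK.Axxx U) := (ZK.smAxxx hu).continuous
  have cAye : Continuous (ZK.Aye U) := (ZK.smAye hu).continuous
  have cBx : Continuous (pd ZK.ex (ZK.Bd U)) := ((ZK.smB hu).pd_smooth _).continuous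
  have cAyey : Continuous (pd ZK.ey (ZK.Aye U)) := ((ZK.smAye hu).pd_smooth _).continuous
  have cSt : Continuous (ZK.St U) := by
    unfold ZK.St; exact (continuous_const.mul cU).mul cC
  have cPx : Continuous (ZK.Px U) := by
    unfold ZK.Px
    exact ((((continuous_const.mul cU).mul cA).add
        ((continuous_const.mul (cU.pow 2)).mul cA)).add
        ((continuous_const.mul cU).mul cAxxx)).sub ((continuous_const.mul cB).mul cBx)
  have cQy : Continuous (ZK.Qy U) := by
    unfold ZK.Qy
    exact ((continuous_const.mul cB).mul cAye).add ((continuous_const.mul cU).mul cAyey)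
  -- goal integrand rewrite : deriv ↦ A
  have edg : ∀ (y τ : ℝ), deriv (fun x' => u x' y τ) 0 = ZK.A U (0, y, τ) :=
    fun y τ => deriv_slice_x hdU 0 y τ
  -- boundary values
  have bvalL : ∀ y ∈ Ioo (-B) B, ∀ τ ∈ Icc 0 T, ZK.P U (L, y, τ) = 0 := by
    intro y hy τ hτ
    obtain ⟨h0', hL', hx'⟩ := hbx y ⟨hy.1.le, hy.2.le⟩ τ hτ
    have hUL : U (L, y, τ) = 0 := hL'
    have hAL : ZK.A U (L, y, τ) = 0 := by
      have e : ZK.A U (L, y, τ) = deriv (fun x' => u x' y τ) L :=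
        (deriv_slice_x hdU L y τ).symm
      rw [e]; exact hx'
    have hBL : ZK.Bd U (L, y, τ) = 0 := by
      have e : ZK.Bd U (L, y, τ) = deriv (fun y' => u L y' τ) y :=
        (deriv_slice_y hdU L y τ).symm
      rw [e]
      exact deriv_zero_of_eventually (Ioo_mem_nhds hy.1 hy.2)
        (fun z hz => (hbx z ⟨hz.1.le, hz.2.le⟩ τ hτ).2.1)
    simp [ZK.P, hUL, hAL, hBL]
  have bval0 : ∀ y ∈ Ioo (-B) B, ∀ τ ∈ Icc 0 T,
      ZK.P U (0, y, τ) = -(ZK.A U (0, y, τ)) ^ 2 := by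
    intro y hy τ hτ
    have hU0 : U (0, y, τ) = 0 := (hbx y ⟨hy.1.le, hy.2.le⟩ τ hτ).1
    have hB0 : ZK.Bd U (0, y, τ) = 0 := by
      have e : ZK.Bd U (0, y, τ) = deriv (fun y' => u 0 y' τ) y :=
        (deriv_slice_y hdU 0 y τ).symm
      rw [e]
      exact deriv_zero_of_eventually (Ioo_mem_nhds hy.1 hy.2)
        (fun z hz => (hbx z ⟨hz.1.le, hz.2.le⟩ τ hτ).1)
    simp [ZK.P, hU0, hB0]
  -- PDE in divergence form
  have hpde' : ∀ x ∈ Ioo 0 L, ∀ y ∈ Ioo (-B) B, ∀ τ ∈ Ioo 0 T,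
      ZK.St U (x, y, τ) = -ZK.Px U (x, y, τ) - ZK.Qy U (x, y, τ) := by
    intro x hx y hy τ hτ
    apply ZK.key_identity hu
    have h := hpde x hx y hy τ hτ
    rw [show deriv (fun t' => u x y t') τ = pd ZK.et U (x, y, τ) from
          deriv_slice_t hdU x y τ,
        show deriv (fun x' => u x' y τ) x = pd ZK.ex U (x, y, τ) from
          deriv_slice_x hdU x y τ,
        show deriv^[3] (fun x' => u x' y τ) x
            = pd ZK.ex (pd ZK.ex (pd ZK.ex U)) (x, y, τ) from ZK.deriv3_slice hu x y τ,
        show deriv (fun x' => deriv^[2] (fun y' => u x' y' τ) y) x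
            = pd ZK.ex (pd ZK.ey (pd ZK.ey U)) (x, y, τ) from ZK.mixed_slice hu x y τ] at h
    exact h
  -- FTC in τ
  have ftcT : ∀ x y : ℝ,
      (u x y t) ^ 2 - (u x y 0) ^ 2 = ∫ τ in Ioo 0 t, ZK.St U (x, y, τ) := by
    intro x y
    exact (integral_Ioo_deriv h0t (fun τ => ZK.hasDerivAt_St hu x y τ)
      (cont_slice_t cSt x y)).symm
  -- FTC in x
  have ftcX : ∀ y ∈ Ioo (-B) B, ∀ τ ∈ Ioo 0 t,
      (∫ x in Ioo 0 L, ZK.Px U (x, y, τ)) = (ZK.A U (0, y, τ)) ^ 2 := by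
    intro y hy τ hτ
    have hτ' : τ ∈ Icc 0 T := ⟨hτ.1.le, hτ.2.le.trans htT⟩
    rw [integral_Ioo_deriv h0L (fun x => ZK.hasDerivAt_Px hu x y τ)
      (cont_slice_x cPx y τ)]
    show ZK.P U (L, y, τ) - ZK.P U (0, y, τ) = _
    rw [bvalL y hy τ hτ', bval0 y hy τ hτ']; ring
  -- FTC in y
  have ftcY : ∀ x ∈ Ioo 0 L, ∀ τ ∈ Ioo 0 t,
      (∫ y in Ioo (-B) B, ZK.Qy U (x, y, τ)) = 0 := by
    intro x hx τ hτ
    have hτ' : τ ∈ Icc 0 T := ⟨hτ.1.le, hτ.2.le.trans htT⟩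
    rw [integral_Ioo_deriv hBB (fun y => ZK.hasDerivAt_Qy hu x y τ)
      (cont_slice_y cQy x τ)]
    show ZK.Q U (x, B, τ) - ZK.Q U (x, -B, τ) = 0
    have h1 := hby x ⟨hx.1.le, hx.2.le⟩ τ hτ'
    have e1 : U (x, B, τ) = 0 := h1.2
    have e2 : U (x, -B, τ) = 0 := h1.1
    simp [ZK.Q, e1, e2]
  -- integral bookkeeping
  have ibt : Integrable (fun z : ℝ × ℝ => (u z.1 z.2 t) ^ 2)
      ((volume.restrict (Ioo 0 L)).prod (volume.restrict (Ioo (-B) B))) :=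
    int_box2 ((cont_slice_xy cU t).pow 2) 0 L (-B) B
  have ib0 : Integrable (fun z : ℝ × ℝ => (u z.1 z.2 0) ^ 2)
      ((volume.restrict (Ioo 0 L)).prod (volume.restrict (Ioo (-B) B))) :=
    int_box2 ((cont_slice_xy cU 0).pow 2) 0 L (-B) B
  have hA_t : (∫ x in Ioo 0 L, ∫ y in Ioo (-B) B, (u x y t) ^ 2)
      = ∫ z, (u z.1 z.2 t) ^ 2
          ∂((volume.restrict (Ioo 0 L)).prod (volume.restrict (Ioo (-B) B))) :=
    MeasureTheory.integral_integral ibt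
  have hA_0 : (∫ x in Ioo 0 L, ∫ y in Ioo (-B) B, (u x y 0) ^ 2)
      = ∫ z, (u z.1 z.2 0) ^ 2
          ∂((volume.restrict (Ioo 0 L)).prod (volume.restrict (Ioo (-B) B))) :=
    MeasureTheory.integral_integral ib0
  have hPint : Integrable (fun w : (ℝ × ℝ) × ℝ => -ZK.Px U (w.1.1, w.1.2, w.2))
      (((volume.restrict (Ioo 0 L)).prod (volume.restrict (Ioo (-B) B))).prod
        (volume.restrict (Ioo 0 t))) :=
    int_box3' ((cPx.comp ((continuous_fst.comp continuous_fst).prodMk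
      (((continuous_snd.comp continuous_fst)).prodMk continuous_snd))).neg) 0 L (-B) B 0 t
  have hQint : Integrable (fun w : (ℝ × ℝ) × ℝ => -ZK.Qy U (w.1.1, w.1.2, w.2))
      (((volume.restrict (Ioo 0 L)).prod (volume.restrict (Ioo (-B) B))).prod
        (volume.restrict (Ioo 0 t))) :=
    int_box3' ((cQy.comp ((continuous_fst.comp continuous_fst).prodMk
      (((continuous_snd.comp continuous_fst)).prodMk continuous_snd))).neg) 0 L (-B) B 0 t
  have hPI : Integrable (fun z : ℝ × ℝ => ∫ τ in Ioo 0 t, -ZK.Px U (z.1, z.2, τ))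
      ((volume.restrict (Ioo 0 L)).prod (volume.restrict (Ioo (-B) B))) :=
    hPint.integral_prod_left
  have hQI : Integrable (fun z : ℝ × ℝ => ∫ τ in Ioo 0 t, -ZK.Qy U (z.1, z.2, τ))
      ((volume.restrict (Ioo 0 L)).prod (volume.restrict (Ioo (-B) B))) :=
    hQint.integral_prod_left
  -- step 1 : difference of energies as a product integral of the time FTC
  have step1 : (∫ x in Ioo 0 L, ∫ y in Ioo (-B) B, (u x y t) ^ 2)
      - (∫ x in Ioo 0 L, ∫ y in Ioo (-B) B, (u x y 0) ^ 2)
      = ∫ z, (∫ τ in Ioo 0 t, ZK.St U (z.1, z.2, τ))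
          ∂((volume.restrict (Ioo 0 L)).prod (volume.restrict (Ioo (-B) B))) := by
    rw [hA_t, hA_0, ← integral_sub ibt ib0]
    exact integral_congr_ae (Filter.Eventually.of_forall fun z => ftcT z.1 z.2)
  -- step 2 : use the PDE pointwise on the open box and split the integral
  have step2 : (∫ z, (∫ τ in Ioo 0 t, ZK.St U (z.1, z.2, τ))
          ∂((volume.restrict (Ioo 0 L)).prod (volume.restrict (Ioo (-B) B))))
      = (∫ z, (∫ τ in Ioo 0 t, -ZK.Px U (z.1, z.2, τ))
          ∂((volume.restrict (Ioo 0 L)).prod (volume.restrict (Ioo (-B) B))))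
      + ∫ z, (∫ τ in Ioo 0 t, -ZK.Qy U (z.1, z.2, τ))
          ∂((volume.restrict (Ioo 0 L)).prod (volume.restrict (Ioo (-B) B))) := by
    rw [← integral_add hPI hQI]
    rw [Measure.prod_restrict]
    refine setIntegral_congr_fun (measurableSet_Ioo.prod measurableSet_Ioo) ?_
    intro z hz
    have heq : ∀ τ ∈ Ioo 0 t,
        ZK.St U (z.1, z.2, τ) = -ZK.Px U (z.1, z.2, τ) + -ZK.Qy U (z.1, z.2, τ) := by
      intro τ hτ
      rw [hpde' z.1 hz.1 z.2 hz.2 τ ⟨hτ.1, lt_of_lt_of_le hτ.2 htT⟩]; ring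
    show (∫ τ in Ioo 0 t, ZK.St U (z.1, z.2, τ))
      = (∫ τ in Ioo 0 t, -ZK.Px U (z.1, z.2, τ)) + ∫ τ in Ioo 0 t, -ZK.Qy U (z.1, z.2, τ)
    rw [setIntegral_congr_fun measurableSet_Ioo heq,
      integral_add (int_Ioo (g := fun τ => -ZK.Px U (z.1, z.2, τ)) ((cont_slice_t cPx z.1 z.2).neg) 0 t)
        (int_Ioo (g := fun τ => -ZK.Qy U (z.1, z.2, τ)) ((cont_slice_t cQy z.1 z.2).neg) 0 t)]
  -- the Q-term vanishes
  have termQ : (∫ z, (∫ τ in Ioo 0 t, -ZK.Qy U (z.1, z.2, τ))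
      ∂((volume.restrict (Ioo 0 L)).prod (volume.restrict (Ioo (-B) B)))) = 0 := by
    have h2 := MeasureTheory.integral_integral
      (f := fun x y => ∫ τ in Ioo 0 t, -ZK.Qy U (x, y, τ)) hQI
    refine Eq.trans h2.symm ?_
    have hx0 : ∀ x ∈ Ioo (0 : ℝ) L,
        (∫ y in Ioo (-B) B, ∫ τ in Ioo 0 t, -ZK.Qy U (x, y, τ)) = 0 := by
      intro x hx
      rw [MeasureTheory.integral_integral_swap (f := fun y τ => -ZK.Qy U (x, y, τ))
        (by exact int_box2 ((cont_slice_yt cQy x).neg) (-B) B 0 t)]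
      have hτ0 : ∀ τ ∈ Ioo (0 : ℝ) t,
          (∫ y in Ioo (-B) B, -ZK.Qy U (x, y, τ)) = 0 := by
        intro τ hτ
        rw [integral_neg, ftcY x hx τ hτ, neg_zero]
      rw [setIntegral_congr_fun measurableSet_Ioo hτ0, integral_zero]
    rw [setIntegral_congr_fun measurableSet_Ioo hx0, integral_zero]
  -- the P-term produces the trace term
  have termP : (∫ z, (∫ τ in Ioo 0 t, -ZK.Px U (z.1, z.2, τ))
      ∂((volume.restrict (Ioo 0 L)).prod (volume.restrict (Ioo (-B) B))))
      = -∫ τ in Ioo 0 t, ∫ y in Ioo (-B) B, (ZK.A U (0, y, τ)) ^ 2 := by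
    have e1 : (fun z : ℝ × ℝ => ∫ τ in Ioo 0 t, -ZK.Px U (z.1, z.2, τ))
        = fun z : ℝ × ℝ => -∫ τ in Ioo 0 t, ZK.Px U (z.1, z.2, τ) :=
      funext fun z => integral_neg _
    rw [e1, integral_neg, neg_inj]
    have hPint' : Integrable (fun w : (ℝ × ℝ) × ℝ => ZK.Px U (w.1.1, w.1.2, w.2))
        (((volume.restrict (Ioo 0 L)).prod (volume.restrict (Ioo (-B) B))).prod
          (volume.restrict (Ioo 0 t))) :=
      int_box3' (cPx.comp ((continuous_fst.comp continuous_fst).prodMk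
        (((continuous_snd.comp continuous_fst)).prodMk continuous_snd))) 0 L (-B) B 0 t
    have hPI' : Integrable (fun z : ℝ × ℝ => ∫ τ in Ioo 0 t, ZK.Px U (z.1, z.2, τ))
        ((volume.restrict (Ioo 0 L)).prod (volume.restrict (Ioo (-B) B))) :=
      hPint'.integral_prod_left
    have h2 := MeasureTheory.integral_integral
      (f := fun x y => ∫ τ in Ioo 0 t, ZK.Px U (x, y, τ)) hPI'
    refine Eq.trans h2.symm ?_
    rw [MeasureTheory.integral_integral_swap hPI']
    have hyv : ∀ y ∈ Ioo (-B) B,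
        (∫ x in Ioo 0 L, ∫ τ in Ioo 0 t, ZK.Px U (x, y, τ))
          = ∫ τ in Ioo 0 t, (ZK.A U (0, y, τ)) ^ 2 := by
      intro y hy
      rw [MeasureTheory.integral_integral_swap (f := fun x' τ => ZK.Px U (x', y, τ))
        (by exact int_box2 (cont_slice_xt cPx y) 0 L 0 t)]
      exact setIntegral_congr_fun measurableSet_Ioo (fun τ hτ => ftcX y hy τ hτ)
    rw [setIntegral_congr_fun measurableSet_Ioo hyv]
    exact MeasureTheory.integral_integral_swap (f := fun y τ => ZK.A U (0, y, τ) ^ 2)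
      (by exact int_box2 (((cont_slice_yt cA 0)).pow 2) (-B) B 0 t)
  -- assemble
  simp only [edg]
  have := step1.trans (step2.trans (by rw [termP, termQ, add_zero]))
  linarith
end
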